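/- Let T > 0, 0 < γ ≤ Γ ≤ T, and let Δt > 0 be such that K = T/Δt is a positive integer and γ/Δt and Γ/Δt are positive integers. Then for the nonnegative parts of the uncertainty sets: (a) for every δ ∈ D_K⁺, the piecewise constant function Lδ belongs to D⁺ (L(D_K⁺) ⊆ D⁺), and (b) L†(D⁺) = D_K⁺. -/

import Mathlib

open MeasureTheory Set

noncomputable section

/-- The continuous-time uncertainty set `D` of measurable frequency-deviation
scenarios `δ : [0,T] → [-1,1]` whose total absolute deviation over every
backward window of length `Γ` is at most `γ`. -/
def Dset (T Γ γ : ℝ) : Set (ℝ → ℝ) :=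
  {δ | Measurable δ ∧ (∀ t ∈ Icc (0:ℝ) T, δ t ∈ Icc (-1:ℝ) 1) ∧
    ∀ t ∈ Icc (0:ℝ) T, (∫ s in (max (t - Γ) 0)..t, |δ s|) ≤ γ}

/-- The nonnegative part `D⁺` of the continuous uncertainty set. -/
def DsetPlus (T Γ γ : ℝ) : Set (ℝ → ℝ) :=
  Dset T Γ γ ∩ {δ | ∀ t ∈ Icc (0:ℝ) T, δ t ∈ Icc (0:ℝ) 1}

/-- The discrete uncertainty set `D_K` (with `0`-based indexing): vectors in
`[-1,1]^K` whose sum of absolute values over each backward window of `W = Γ/Δt`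
periods is at most `g = γ/Δt`. -/
def DK (K W g : ℕ) : Set (Fin K → ℝ) :=
  {δ | (∀ l, |δ l| ≤ 1) ∧ ∀ k : Fin K,
    (∑ l ∈ Finset.univ.filter
      (fun l : Fin K => (k : ℕ) + 1 - W ≤ (l : ℕ) ∧ (l : ℕ) ≤ (k : ℕ)), |δ l|) ≤ (g : ℝ)}

/-- The nonnegative part `D_K⁺` of the discrete uncertainty set. -/
def DKplus (K W g : ℕ) : Set (Fin K → ℝ) :=
  DK K W g ∩ {δ | ∀ l, 0 ≤ δ l}

/-- The lifting operator `L` mapping a vector to the piecewise constant function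
with value `v k` on `[kΔt, (k+1)Δt)` (0-based), and `v (K-1)` at `t = KΔt`. -/
def lift (Δt : ℝ) {K : ℕ} (v : Fin K → ℝ) : ℝ → ℝ := fun t =>
  if h : min (⌊t / Δt⌋.toNat) (K - 1) < K then v ⟨min (⌊t / Δt⌋.toNat) (K - 1), h⟩ else 0

/-- The averaging operator `L†` mapping a function to its vector of averages
over the trading intervals. -/
def avg (Δt : ℝ) (K : ℕ) (w : ℝ → ℝ) : Fin K → ℝ := fun k =>
  (1 / Δt) * ∫ s in (((k : ℕ) : ℝ) * Δt)..((((k : ℕ) : ℝ) + 1) * Δt), w s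

/-- The integrand of the continuous-time state-of-charge. -/
def socIntegrand (ηp ηm : ℝ) (xb xr δ d : ℝ → ℝ) (s : ℝ) : ℝ :=
  ηp * max (xb s + δ s * xr s) 0 - (1 / ηm) * max (-(xb s + δ s * xr s)) 0 - d s

/-- The continuous-time state-of-charge `y(x^b, x^r, δ, y₀, t)`. -/
def soc (ηp ηm : ℝ) (xb xr δ d : ℝ → ℝ) (y0 t : ℝ) : ℝ :=
  y0 + ∫ s in (0:ℝ)..t, socIntegrand ηp ηm xb xr δ d s

/-- The discrete-time state-of-charge `y_k(𝐱^b, 𝐱^r, 𝛅, y₀)` (0-based indexing: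
the sum extends over the first `k` components). -/
def ysoc (Δt ηp ηm : ℝ) {K : ℕ} (xb xr δ d : Fin K → ℝ) (y0 : ℝ) (k : ℕ) : ℝ :=
  y0 + Δt * ∑ l ∈ Finset.univ.filter (fun l : Fin K => (l : ℕ) < k),
    (ηp * max (xb l + δ l * xr l) 0 - (1 / ηm) * max (-(xb l + δ l * xr l)) 0 - d l)

/-! The lift of a vector is a step function on the grid of mesh `Δt`. As `Γ = W Δt` is a
multiple of `Δt`, both ends of the window `[t - Γ, t]` cross grid points simultaneously, so for
`t` in the cell `[kΔt, (k+1)Δt]` the window integral equals `((k+1)Δt - t) A + (t - kΔt) B`, where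
`A` and `B` are the discrete window sums ending at cells `k - 1` and `k`; both are at most `g`.
Conversely, the discrete window sum of the cell averages of `δ ∈ D⁺` ending at cell `k` is
`1/Δt` times the integral of `δ ≥ 0` over a subinterval of the continuous window ending at
`(k+1)Δt`, hence at most `γ / Δt = g`. Surjectivity of `L†` follows from `L† ∘ L = id`. -/

section StepFunction

variable {Δt : ℝ} {K : ℕ} {v : ℕ → ℝ}

def stepFun (Δt : ℝ) (K : ℕ) (v : ℕ → ℝ) : ℝ → ℝ := fun t =>
  v (min ⌊t / Δt⌋.toNat (K - 1))

theorem measurable_stepFun : Measurable (stepFun Δt K v) :=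
  (measurable_from_top (f := fun n : ℤ => v (min n.toNat (K - 1)))).comp
    (Int.measurable_floor.comp (measurable_id.div_const _))

theorem stepFun_eq_of_mem_Ioo (hΔt : 0 < Δt) {k : ℕ} (hk : k < K) {s : ℝ}
    (hs : s ∈ Ioo (k * Δt) ((k + 1) * Δt)) : stepFun Δt K v s = v k := by
  have hfloor : ⌊s / Δt⌋ = k := by
    rw [Int.floor_eq_iff, le_div_iff₀ hΔt, div_lt_iff₀ hΔt]
    push_cast
    exact ⟨hs.1.le, hs.2⟩
  simp only [stepFun, hfloor, Int.toNat_natCast]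
  congr 1
  omega

theorem integral_stepFun_of_subset_cell (hΔt : 0 < Δt) {k : ℕ} (hk : k < K) {a b : ℝ}
    (hka : k * Δt ≤ a) (hab : a ≤ b) (hbk : b ≤ (k + 1) * Δt) :
    IntervalIntegrable (stepFun Δt K v) volume a b ∧
      ∫ s in a..b, stepFun Δt K v s = (b - a) * v k := by
  have hconst : EqOn (fun _ => v k) (stepFun Δt K v) (uIoo a b) := by
    rw [uIoo_of_le hab]
    exact fun s hs => (stepFun_eq_of_mem_Ioo hΔt hk
      ⟨hka.trans_lt hs.1, hs.2.trans_le hbk⟩).symm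
  refine ⟨intervalIntegrable_const.congr_uIoo hconst, ?_⟩
  rw [← intervalIntegral.integral_congr_Ioo_of_le hab (by rwa [uIoo_of_le hab] at hconst),
    intervalIntegral.integral_const, smul_eq_mul]

theorem integral_stepFun_grid (hΔt : 0 < Δt) {n : ℕ} (hn : n ≤ K) :
    IntervalIntegrable (stepFun Δt K v) volume 0 (n * Δt) ∧
      ∫ s in (0 : ℝ)..n * Δt, stepFun Δt K v s = Δt * ∑ i ∈ Finset.range n, v i := by
  have hcell : ∀ i < n,
      IntervalIntegrable (stepFun Δt K v) volume (i * Δt) ((i + 1 : ℕ) * Δt) ∧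
      ∫ s in (i : ℝ) * Δt..(i + 1 : ℕ) * Δt, stepFun Δt K v s = Δt * v i := by
    intro i hi
    push_cast
    obtain ⟨hint, heq⟩ := integral_stepFun_of_subset_cell (v := v) hΔt (hi.trans_le hn)
      le_rfl (by nlinarith) le_rfl
    exact ⟨hint, by rw [heq]; ring⟩
  have h := intervalIntegral.sum_integral_adjacent_intervals (a := fun i : ℕ => i * Δt)
    (fun i hi => (hcell i hi).1)
  simp only [Nat.cast_zero, zero_mul] at h
  have hint := IntervalIntegrable.trans_iterate (a := fun i : ℕ => i * Δt)
    fun i hi => (hcell i hi).1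
  simp only [Nat.cast_zero, zero_mul] at hint
  refine ⟨hint, ?_⟩
  rw [← h, Finset.mul_sum]
  exact Finset.sum_congr rfl fun i hi => (hcell i (Finset.mem_range.mp hi)).2

theorem integral_stepFun_of_mem_cell (hΔt : 0 < Δt) {k : ℕ} (hk : k < K) {t : ℝ}
    (hkt : k * Δt ≤ t) (htk : t ≤ (k + 1) * Δt) :
    IntervalIntegrable (stepFun Δt K v) volume 0 t ∧
      ∫ s in (0 : ℝ)..t, stepFun Δt K v s =
        Δt * ∑ i ∈ Finset.range k, v i + (t - k * Δt) * v k := by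
  obtain ⟨hint₁, heq₁⟩ := integral_stepFun_grid (v := v) hΔt hk.le
  obtain ⟨hint₂, heq₂⟩ := integral_stepFun_of_subset_cell (v := v) hΔt hk le_rfl hkt htk
  exact ⟨hint₁.trans hint₂, by
    rw [← intervalIntegral.integral_add_adjacent_intervals hint₁ hint₂, heq₁, heq₂]⟩

theorem exists_mem_cell (hΔt : 0 < Δt) {n : ℕ} (hn : 0 < n) {t : ℝ} (ht : 0 ≤ t)
    (htn : t ≤ n * Δt) : ∃ k < n, k * Δt ≤ t ∧ t ≤ (k + 1) * Δt := by
  have hfloor := Nat.floor_le (div_nonneg ht hΔt.le)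
  refine ⟨min ⌊t / Δt⌋₊ (n - 1), by omega, ?_, ?_⟩
  · rw [← le_div_iff₀ hΔt]
    exact le_trans (by exact_mod_cast min_le_left _ _) hfloor
  · rcases le_total ⌊t / Δt⌋₊ (n - 1) with h | h
    · rw [min_eq_left h, ← div_le_iff₀ hΔt]
      exact (Nat.lt_floor_add_one _).le
    · rw [min_eq_right h, Nat.cast_sub (by omega), Nat.cast_one, sub_add_cancel]
      exact htn

theorem integral_stepFun_window_le (hΔt : 0 < Δt) {W : ℕ} {g : ℝ}
    (hwin : ∀ n ≤ K, ∑ i ∈ Finset.Ico (n - W) n, v i ≤ g) {t : ℝ} (ht : 0 ≤ t)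
    (htK : t ≤ K * Δt) :
    ∫ s in max (t - W * Δt) 0..t, stepFun Δt K v s ≤ g * Δt := by
  have hg : 0 ≤ g := by simpa using hwin 0 (Nat.zero_le _)
  rcases le_or_gt t (W * Δt) with htW | htW
  · rw [max_eq_right (by linarith)]
    have htWK : t ≤ (min W K : ℕ) * Δt := by
      rw [Nat.cast_min, min_mul_of_nonneg _ _ hΔt.le]
      exact le_min htW htK
    rcases Nat.eq_zero_or_pos (min W K) with h0 | hpos
    · rw [h0, Nat.cast_zero, zero_mul] at htWK
      rw [le_antisymm htWK ht, intervalIntegral.integral_same]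
      positivity
    obtain ⟨k, hk, hkt, htk⟩ := exists_mem_cell hΔt hpos ht htWK
    rw [(integral_stepFun_of_mem_cell hΔt (hk.trans_le (min_le_right _ _)) hkt htk).2]
    have hA := hwin k (by omega)
    have hB := hwin (k + 1) (by omega)
    rw [Nat.sub_eq_zero_of_le (by omega), Nat.Ico_zero_eq_range] at hA hB
    rw [Finset.sum_range_succ] at hB
    nlinarith [mul_le_mul_of_nonneg_left hA (sub_nonneg.2 htk),
      mul_le_mul_of_nonneg_left hB (sub_nonneg.2 hkt)]
  have hWK : W < K := by
    exact_mod_cast lt_of_mul_lt_mul_right (htW.trans_le htK) hΔt.le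
  obtain ⟨k, hk, hkt, htk⟩ := exists_mem_cell hΔt (by omega) ht htK
  have hWk : W ≤ k := by
    have : W < k + 1 := by exact_mod_cast lt_of_mul_lt_mul_right (htW.trans_le htk) hΔt.le
    omega
  have hcast : ((k - W : ℕ) : ℝ) = k - W := Nat.cast_sub hWk
  obtain ⟨hint, heq⟩ := integral_stepFun_of_mem_cell (v := v) hΔt hk hkt htk
  obtain ⟨hint', heq'⟩ := integral_stepFun_of_mem_cell (v := v) (K := K) (k := k - W)
    (t := t - W * Δt) hΔt (by omega) (by rw [hcast]; linarith) (by rw [hcast]; linarith)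
  rw [max_eq_left (by linarith), ← intervalIntegral.integral_interval_sub_left hint hint',
    heq, heq', hcast]
  have hA := hwin k hk.le
  have hB := hwin (k + 1) hk
  rw [Finset.sum_Ico_eq_sub _ (by omega)] at hA hB
  rw [show k + 1 - W = k - W + 1 by omega, Finset.sum_range_succ, Finset.sum_range_succ] at hB
  nlinarith [mul_le_mul_of_nonneg_left hA (sub_nonneg.2 htk),
    mul_le_mul_of_nonneg_left hB (sub_nonneg.2 hkt)]

end StepFunction

def extendByZero {K : ℕ} (v : Fin K → ℝ) : ℕ → ℝ := fun i =>
  if h : i < K then v ⟨i, h⟩ else 0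

theorem extendByZero_val {K : ℕ} (v : Fin K → ℝ) (l : Fin K) : extendByZero v l = v l := by
  simp [extendByZero]

theorem lift_eq_stepFun (Δt : ℝ) {K : ℕ} (v : Fin K → ℝ) :
    lift Δt v = stepFun Δt K (extendByZero v) :=
  rfl

theorem sum_filter_window_eq {K : ℕ} (W : ℕ) (u : ℕ → ℝ) (k : Fin K) :
    ∑ l ∈ Finset.univ.filter
        (fun l : Fin K => (k : ℕ) + 1 - W ≤ (l : ℕ) ∧ (l : ℕ) ≤ k), u l =
      ∑ i ∈ Finset.Ico (k + 1 - W) (k + 1), u i := by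
  rw [Finset.sum_filter,
    Fin.sum_univ_eq_sum_range (fun i => if k + 1 - W ≤ i ∧ i ≤ k then u i else 0),
    ← Finset.sum_filter]
  congr 1
  ext i
  simp only [Finset.mem_filter, Finset.mem_range, Finset.mem_Ico]
  omega

section DiscreteSet

variable {K W g : ℕ} {δ : Fin K → ℝ}

theorem extendByZero_mem_Icc_of_mem_DKplus (hδ : δ ∈ DKplus K W g) (i : ℕ) :
    extendByZero δ i ∈ Icc 0 1 := by
  unfold extendByZero
  split
  · exact ⟨hδ.2 _, (le_abs_self _).trans (hδ.1.1 _)⟩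
  · simp

theorem window_sum_le_of_mem_DKplus (hδ : δ ∈ DKplus K W g) :
    ∀ n ≤ K, ∑ i ∈ Finset.Ico (n - W) n, extendByZero δ i ≤ g
  | 0, _ => by simp
  | k + 1, hk => by
    rw [← sum_filter_window_eq W _ ⟨k, hk⟩]
    refine le_of_eq_of_le (Finset.sum_congr rfl fun l _ => ?_) (hδ.1.2 ⟨k, hk⟩)
    rw [extendByZero_val, abs_of_nonneg (hδ.2 l)]

theorem lift_mem_DsetPlus {Δt : ℝ} (hΔt : 0 < Δt) (hδ : δ ∈ DKplus K W g) :
    lift Δt δ ∈ DsetPlus (K * Δt) (W * Δt) (g * Δt) := by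
  have hval : ∀ t, lift Δt δ t ∈ Icc 0 1 := fun t => extendByZero_mem_Icc_of_mem_DKplus hδ _
  refine ⟨⟨measurable_stepFun (v := extendByZero δ),
    fun t _ => ⟨by linarith [(hval t).1], (hval t).2⟩, fun t ht => ?_⟩, fun t _ => hval t⟩
  rw [intervalIntegral.integral_congr (g := lift Δt δ) fun s _ => abs_of_nonneg (hval s).1]
  exact integral_stepFun_window_le hΔt (window_sum_le_of_mem_DKplus hδ) ht.1 ht.2

theorem avg_lift {Δt : ℝ} (hΔt : 0 < Δt) (v : Fin K → ℝ) : avg Δt K (lift Δt v) = v := by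
  funext k
  rw [avg, lift_eq_stepFun, (integral_stepFun_of_subset_cell hΔt k.isLt le_rfl
    (by linarith) le_rfl).2, extendByZero_val]
  field_simp
  ring

end DiscreteSet

section ContinuousSet

variable {T Γ γ : ℝ} {δ : ℝ → ℝ}

theorem intervalIntegrable_of_mem_Dset (hδ : δ ∈ Dset T Γ γ) {a b : ℝ} (ha : 0 ≤ a)
    (hab : a ≤ b) (hb : b ≤ T) : IntervalIntegrable δ volume a b := by
  rw [intervalIntegrable_iff_integrableOn_Ioc_of_le hab]
  refine Measure.integrableOn_of_bounded (M := 1) measure_Ioc_lt_top.ne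
    hδ.1.aestronglyMeasurable (ae_restrict_of_forall_mem measurableSet_Ioc fun t ht => ?_)
  rw [Real.norm_eq_abs, abs_le]
  exact hδ.2.1 t ⟨ha.trans ht.1.le, ht.2.trans hb⟩

def cellAvg (Δt : ℝ) (w : ℝ → ℝ) (i : ℕ) : ℝ :=
  (1 / Δt) * ∫ s in (i : ℝ) * Δt..(i + 1) * Δt, w s

theorem sum_cellAvg_Ico {Δt : ℝ} {w : ℝ → ℝ} {a b : ℕ} (hab : a ≤ b)
    (hint : ∀ i ∈ Finset.Ico a b, IntervalIntegrable w volume (i * Δt) ((i + 1) * Δt)) :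
    ∑ i ∈ Finset.Ico a b, cellAvg Δt w i =
      (1 / Δt) * ∫ s in (a : ℝ) * Δt..b * Δt, w s := by
  rw [← intervalIntegral.sum_integral_adjacent_intervals_Ico
    (a := fun i : ℕ => i * Δt) hab (by simpa using hint), Finset.mul_sum]
  simp [cellAvg]

theorem cellAvg_mem_Icc_of_mem_DsetPlus {Δt : ℝ} (hΔt : 0 < Δt) (hδ : δ ∈ DsetPlus T Γ γ)
    {i : ℕ} (hi : (i + 1) * Δt ≤ T) : cellAvg Δt δ i ∈ Icc 0 1 := by
  have hle : i * Δt ≤ (i + 1) * Δt := by linarith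
  have hval : ∀ t ∈ Icc (i * Δt) ((i + 1) * Δt), δ t ∈ Icc 0 1 :=
    fun t ht => hδ.2 t ⟨(by positivity : (0 : ℝ) ≤ i * Δt).trans ht.1, ht.2.trans hi⟩
  have hmono := intervalIntegral.integral_mono_on hle
    (intervalIntegrable_of_mem_Dset hδ.1 (by positivity) hle hi) intervalIntegrable_const
    fun t ht => (hval t ht).2
  rw [intervalIntegral.integral_const, smul_eq_mul, mul_one] at hmono
  refine ⟨mul_nonneg (by positivity)
    (intervalIntegral.integral_nonneg hle fun t ht => (hval t ht).1), ?_⟩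
  calc cellAvg Δt δ i ≤ (1 / Δt) * ((i + 1) * Δt - i * Δt) :=
        mul_le_mul_of_nonneg_left hmono (by positivity)
    _ = 1 := by field_simp; ring

theorem sum_cellAvg_window_le {Δt : ℝ} (hΔt : 0 < Δt) {K W : ℕ}
    (hδ : δ ∈ DsetPlus (K * Δt) (W * Δt) γ) {n : ℕ} (hn : n ≤ K) :
    ∑ i ∈ Finset.Ico (n - W) n, cellAvg Δt δ i ≤ γ / Δt := by
  set t : ℝ := n * Δt
  have htT : t ≤ K * Δt := mul_le_mul_of_nonneg_right (by exact_mod_cast hn) hΔt.le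
  have ha : t - W * Δt ≤ (n - W : ℕ) * Δt := by
    have : (n : ℝ) ≤ (n - W : ℕ) + W := by exact_mod_cast (by omega : n ≤ n - W + W)
    nlinarith
  have hat : ((n - W : ℕ) : ℝ) * Δt ≤ t :=
    mul_le_mul_of_nonneg_right (by exact_mod_cast Nat.sub_le n W) hΔt.le
  have hstart : 0 ≤ max (t - W * Δt) 0 := le_max_right _ _
  have hwin : max (t - W * Δt) 0 ≤ t := max_le (by nlinarith) (by positivity)
  have hnonneg : ∀ s ∈ Icc (max (t - W * Δt) 0) t, 0 ≤ δ s :=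
    fun s hs => (hδ.2 s ⟨hstart.trans hs.1, hs.2.trans htT⟩).1
  have hcells : ∀ i ∈ Finset.Ico (n - W) n,
      IntervalIntegrable δ volume (i * Δt) ((i + 1) * Δt) := fun i hi => by
    have : (i : ℝ) + 1 ≤ K := by exact_mod_cast (Finset.mem_Ico.mp hi).2.trans_le hn
    exact intervalIntegrable_of_mem_Dset hδ.1 (by positivity) (by linarith) (by nlinarith)
  rw [sum_cellAvg_Ico (Nat.sub_le n W) hcells, one_div_mul_eq_div]
  gcongr
  calc ∫ s in (n - W : ℕ) * Δt..t, δ s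
      ≤ ∫ s in max (t - W * Δt) 0..t, δ s :=
        intervalIntegral.integral_mono_interval (max_le ha (by positivity)) hat le_rfl
          (ae_restrict_of_forall_mem measurableSet_Ioc fun s hs =>
            hnonneg s (Ioc_subset_Icc_self hs))
          (intervalIntegrable_of_mem_Dset hδ.1 hstart hwin htT)
    _ = ∫ s in max (t - W * Δt) 0..t, |δ s| :=
        intervalIntegral.integral_congr fun s hs =>
          (abs_of_nonneg (hnonneg s (by rwa [uIcc_of_le hwin] at hs))).symm
    _ ≤ γ := hδ.1.2.2 t ⟨by positivity, htT⟩

end ContinuousSet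

theorem avg_mem_DKplus {Δt : ℝ} (hΔt : 0 < Δt) {K W g : ℕ} {δ : ℝ → ℝ}
    (hδ : δ ∈ DsetPlus (K * Δt) (W * Δt) (g * Δt)) : avg Δt K δ ∈ DKplus K W g := by
  have hval : ∀ k : Fin K, avg Δt K δ k ∈ Icc 0 1 := fun k =>
    cellAvg_mem_Icc_of_mem_DsetPlus hΔt hδ (by gcongr; exact_mod_cast k.isLt)
  refine ⟨⟨fun l => abs_le.2 ⟨by linarith [(hval l).1], (hval l).2⟩, fun k => ?_⟩,
    fun l => (hval l).1⟩
  rw [Finset.sum_congr rfl fun l _ => abs_of_nonneg (hval l).1]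
  calc _ = ∑ i ∈ Finset.Ico (k + 1 - W) (k + 1), cellAvg Δt δ i :=
        sum_filter_window_eq W (cellAvg Δt δ) k
    _ ≤ g * Δt / Δt := sum_cellAvg_window_le hΔt hδ k.isLt
    _ = g := by field_simp

theorem stmt_5_general (Δt : ℝ) (K W g : ℕ) (hΔt : 0 < Δt)
    (T Γ γ : ℝ) (hT : T = K * Δt) (hΓ : Γ = W * Δt) (hγ : γ = g * Δt) :
    (∀ δ ∈ DKplus K W g, lift Δt δ ∈ DsetPlus T Γ γ) ∧
    (∀ δ ∈ DsetPlus T Γ γ, avg Δt K δ ∈ DKplus K W g) ∧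
    (∀ v ∈ DKplus K W g, ∃ δ ∈ DsetPlus T Γ γ, avg Δt K δ = v) := by
  subst hT hΓ hγ
  exact ⟨fun δ hδ => lift_mem_DsetPlus hΔt hδ, fun δ hδ => avg_mem_DKplus hΔt hδ,
    fun v hv => ⟨lift Δt v, lift_mem_DsetPlus hΔt hv, avg_lift hΔt v⟩⟩

/-- Proposition 3(ii): for the nonnegative parts of the
uncertainty sets, `L(D_K⁺) ⊆ D⁺` and `L†(D⁺) = D_K⁺`. -/
theorem stmt_5 (Δt : ℝ) (K W g : ℕ) (hΔt : 0 < Δt)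
    (hg : 0 < g) (hgW : g ≤ W) (hWK : W ≤ K)
    (T Γ γ : ℝ) (hT : T = K * Δt) (hΓ : Γ = W * Δt) (hγ : γ = g * Δt) :
    (∀ δ ∈ DKplus K W g, lift Δt δ ∈ DsetPlus T Γ γ) ∧
    (∀ δ ∈ DsetPlus T Γ γ, avg Δt K δ ∈ DKplus K W g) ∧
    (∀ v ∈ DKplus K W g, ∃ δ ∈ DsetPlus T Γ γ, avg Δt K δ = v) :=
  stmt_5_general Δt K W g hΔt T Γ γ hT hΓ hγ
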